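/- arXiv:1907.07718 — 3 statements merged into one kernel-verified Lean document; each statement's English description precedes it below -/
import Mathlib

section
/- If h : [0,∞) → ℝ is differentiable with h(0) = h₀ < 0 and satisfies ḣ(t) ≥ γ |h(t)|^ρ whenever h(t) < 0 (with γ > 0, ρ ∈ [0,1)), then there exists T ≤ |h₀|^{1−ρ} / (γ(1−ρ)) such that h(T) ≥ 0. -/
/-! While `h < 0`, the inequality `ḣ ≥ γ (-h)^ρ` says exactly that
`t ↦ (-h t)^(1-ρ) + γ (1-ρ) t` is nonincreasing. If `h` stayed negative on `[0, T]` with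
`γ (1-ρ) T = |h₀|^(1-ρ)`, this function would start at `|h₀|^(1-ρ)` and end strictly above it. -/

open Set

theorem antitoneOn_rpow_neg_add_mul {D : Set ℝ} (hD : Convex ℝ D) {h h' : ℝ → ℝ} {γ ρ : ℝ}
    (hρ : ρ ≤ 1) (hcont : ContinuousOn h D)
    (hderiv : ∀ t ∈ interior D, HasDerivAt h (h' t) t)
    (hneg : ∀ t ∈ interior D, h t < 0)
    (hineq : ∀ t ∈ interior D, γ * (-h t) ^ ρ ≤ h' t) :
    AntitoneOn (fun t => (-h t) ^ (1 - ρ) + γ * (1 - ρ) * t) D := by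
  have hcont' : ContinuousOn (fun t => (-h t) ^ (1 - ρ) + γ * (1 - ρ) * t) D :=
    (hcont.neg.rpow_const fun _ _ => Or.inr (by linarith)).add (by fun_prop)
  have hderiv' : ∀ t ∈ interior D, HasDerivAt (fun t => (-h t) ^ (1 - ρ) + γ * (1 - ρ) * t)
      (-h' t * (1 - ρ) * (-h t) ^ (1 - ρ - 1) + γ * (1 - ρ)) t := fun t ht =>
    (((hderiv t ht).neg.rpow_const (Or.inl (neg_pos.2 (hneg t ht)).ne')).add
      ((hasDerivAt_id t).const_mul (γ * (1 - ρ)))).congr_deriv (by rw [Pi.neg_apply]; ring)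
  refine antitoneOn_of_hasDerivWithinAt_nonpos hD hcont'
    (fun t ht => (hderiv' t ht).hasDerivWithinAt) fun t ht => ?_
  set u := -h t
  have hu : 0 < u := neg_pos.2 (hneg t ht)
  have hγ : γ ≤ h' t * u ^ (1 - ρ - 1) := by
    rw [show 1 - ρ - 1 = -ρ by ring, Real.rpow_neg hu.le, ← div_eq_mul_inv,
      le_div_iff₀ (Real.rpow_pos_of_pos hu ρ)]
    exact hineq t ht
  nlinarith [mul_nonneg (sub_nonneg.2 hγ) (sub_nonneg.2 hρ)]

theorem stmt_3_general (γ ρ h₀ : ℝ) (hγ : 0 < γ) (hρ1 : ρ < 1)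
    (h : ℝ → ℝ) (hdiff : Differentiable ℝ h) (h0 : h 0 = h₀) (hneg : h₀ < 0)
    (hineq : ∀ t ≥ (0 : ℝ), h t < 0 → deriv h t ≥ γ * |h t| ^ ρ) :
    ∃ T : ℝ, 0 ≤ T ∧ T ≤ |h₀| ^ (1 - ρ) / (γ * (1 - ρ)) ∧ 0 ≤ h T := by
  set T := |h₀| ^ (1 - ρ) / (γ * (1 - ρ))
  have hc : 0 < γ * (1 - ρ) := mul_pos hγ (by linarith)
  have hcT : γ * (1 - ρ) * T = |h₀| ^ (1 - ρ) := mul_div_cancel₀ _ hc.ne'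
  have hT : 0 < T := div_pos (Real.rpow_pos_of_pos (abs_pos.2 hneg.ne) _) hc
  by_contra! hstay
  have hstay' : ∀ t ∈ Icc 0 T, h t < 0 := fun t ht => hstay t ht.1 ht.2
  have hanti := antitoneOn_rpow_neg_add_mul (convex_Icc 0 T) hρ1.le hdiff.continuous.continuousOn
    (fun t _ => (hdiff t).hasDerivAt) (fun t ht => hstay' t (interior_subset ht))
    fun t ht => by
      have hht := hstay' t (interior_subset ht)
      simpa [abs_of_neg hht] using hineq t (interior_subset ht).1 hht
  have hle := hanti (left_mem_Icc.2 hT.le) (right_mem_Icc.2 hT.le) hT.le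
  have hend : 0 < (-h T) ^ (1 - ρ) :=
    Real.rpow_pos_of_pos (neg_pos.2 (hstay' T (right_mem_Icc.2 hT.le))) _
  simp only [h0, hcT, mul_zero, add_zero, ← abs_of_neg hneg] at hle
  linarith

/-- Finite-time convergence: if `h` is differentiable with `h 0 = h₀ < 0` and
`ḣ(t) ≥ γ |h t|^ρ` whenever `h t < 0` (for `t ≥ 0`), with `γ > 0`, `ρ ∈ [0,1)`,
then `h` becomes nonnegative by time `|h₀|^(1-ρ)/(γ(1-ρ))`. -/
theorem stmt_3 (γ ρ h₀ : ℝ) (hγ : 0 < γ) (hρ0 : 0 ≤ ρ) (hρ1 : ρ < 1)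
    (h : ℝ → ℝ) (hdiff : Differentiable ℝ h) (h0 : h 0 = h₀) (hneg : h₀ < 0)
    (hineq : ∀ t ≥ (0 : ℝ), h t < 0 → deriv h t ≥ γ * |h t| ^ ρ) :
    ∃ T : ℝ, 0 ≤ T ∧ T ≤ |h₀| ^ (1 - ρ) / (γ * (1 - ρ)) ∧ 0 ≤ h T :=
  stmt_3_general γ ρ h₀ hγ hρ1 h hdiff h0 hneg hineq
end

section
/- If h : [0,∞) → ℝ is differentiable, h(t₀) ≥ 0, and ḣ(t) ≥ −γ · sign(h(t)) · |h(t)|^ρ for all t ≥ t₀ (with γ > 0, ρ ∈ [0,1)), then h(t) ≥ 0 for all t ≥ t₀ (forward invariance of the superzero-level set). -/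
/-! A solution can only become negative by leaving the last time `s` at which it was
nonnegative; but while `h < 0` the barrier condition makes `ḣ ≥ γ |h|^ρ ≥ 0`, so `h` is
nondecreasing after `s` and cannot drop below `h s ≥ 0`. -/

open Set

theorem exists_nonneg_forall_Ioc_neg {h : ℝ → ℝ} {a b : ℝ} (hab : a ≤ b)
    (hcont : ContinuousOn h (Icc a b)) (ha : 0 ≤ h a) :
    ∃ s ∈ Icc a b, 0 ≤ h s ∧ ∀ t ∈ Ioc s b, h t < 0 := by
  set S := Icc a b ∩ h ⁻¹' Ici 0
  have hS_closed : IsClosed S := hcont.preimage_isClosed_of_isClosed isClosed_Icc isClosed_Ici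
  have hS_bdd : BddAbove S := ⟨b, fun x hx => hx.1.2⟩
  obtain ⟨hs_mem, hs_nonneg⟩ : sSup S ∈ S :=
    hS_closed.csSup_mem ⟨a, ⟨left_mem_Icc.2 hab, ha⟩⟩ hS_bdd
  refine ⟨sSup S, hs_mem, hs_nonneg, fun t ht => ?_⟩
  by_contra! ht_nonneg
  have ht_mem : t ∈ S := ⟨⟨hs_mem.1.trans ht.1.le, ht.2⟩, ht_nonneg⟩
  exact (le_csSup hS_bdd ht_mem).not_gt ht.1

theorem nonneg_of_deriv_nonneg_of_neg {h : ℝ → ℝ} {t₀ : ℝ}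
    (hcont : ContinuousOn h (Ici t₀)) (hdiff : DifferentiableOn ℝ h (Ioi t₀))
    (hinit : 0 ≤ h t₀) (hderiv : ∀ t > t₀, h t < 0 → 0 ≤ deriv h t) :
    ∀ t ≥ t₀, 0 ≤ h t := by
  intro t ht
  by_contra! hneg
  obtain ⟨s, ⟨hs₀, hst⟩, hs_nonneg, hneg_after⟩ :=
    exists_nonneg_forall_Ioc_neg ht (hcont.mono Icc_subset_Ici_self) hinit
  have hIoo : Ioo s t ⊆ Ioi t₀ := Ioo_subset_Ioi_self.trans (Ioi_subset_Ioi hs₀)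
  have hmono : MonotoneOn h (Icc s t) := by
    refine monotoneOn_of_deriv_nonneg (convex_Icc s t)
      (hcont.mono ((Icc_subset_Ici_iff hst).2 hs₀)) ?_ ?_ <;> rw [interior_Icc]
    · exact hdiff.mono hIoo
    · exact fun x hx => hderiv x (hIoo hx) (hneg_after x (Ioo_subset_Ioc_self hx))
  have := hmono (left_mem_Icc.2 hst) (right_mem_Icc.2 hst) hst
  linarith

theorem stmt_5_general (γ ρ t₀ : ℝ) (hγ : 0 < γ)
    (h : ℝ → ℝ) (hdiff : Differentiable ℝ h) (hinit : 0 ≤ h t₀)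
    (hineq : ∀ t ≥ t₀, deriv h t ≥ -(γ * Real.sign (h t) * |h t| ^ ρ)) :
    ∀ t ≥ t₀, 0 ≤ h t := by
  refine nonneg_of_deriv_nonneg_of_neg hdiff.continuous.continuousOn hdiff.differentiableOn
    hinit fun t ht hneg => ?_
  have hbarrier := hineq t ht.le
  rw [Real.sign_of_neg hneg] at hbarrier
  have : 0 ≤ γ * |h t| ^ ρ := by positivity
  linarith

/-- Forward invariance: if `h` is differentiable, `h t₀ ≥ 0`, and
`ḣ(t) ≥ −γ sign(h t) |h t|^ρ` for all `t ≥ t₀` (γ > 0, ρ ∈ [0,1)), then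
`h t ≥ 0` for all `t ≥ t₀`. -/
theorem stmt_5 (γ ρ t₀ : ℝ) (hγ : 0 < γ) (hρ0 : 0 ≤ ρ) (hρ1 : ρ < 1)
    (h : ℝ → ℝ) (hdiff : Differentiable ℝ h) (hinit : 0 ≤ h t₀)
    (hineq : ∀ t ≥ t₀, deriv h t ≥ -(γ * Real.sign (h t) * |h t| ^ ρ)) :
    ∀ t ≥ t₀, 0 ≤ h t :=
  stmt_5_general γ ρ t₀ hγ h hdiff hinit hineq
end

section
/- Suppose for each edge (i,j) in a finite edge set E, a differentiable function h_{ij} : [0,∞) → ℝ satisfies ḣ_{ij}(t) ≥ −γ sign(h_{ij}(t)) |h_{ij}(t)|^ρ with γ > 0, ρ ∈ [0,1). Then there exists a time T, with T ≤ max over edges with h_{ij}(0) < 0 of |h_{ij}(0)|^{1−ρ}/(γ(1−ρ)) (and T = 0 if all h_{ij}(0) ≥ 0), such that h_{ij}(t) ≥ 0 for all edges (i,j) ∈ E and all t ≥ T. -/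
lemma barrier_invariance (γ ρ : ℝ) (hγ : 0 < γ) (f : ℝ → ℝ)
    (hdiff : Differentiable ℝ f)
    (hineq : ∀ t ≥ (0:ℝ), deriv f t ≥ -(γ * Real.sign (f t) * |f t| ^ ρ))
    {t0 t : ℝ} (ht0 : 0 ≤ t0) (hf0 : 0 ≤ f t0) (ht : t0 ≤ t) : 0 ≤ f t := by
  by_contra hneg
  push_neg at hneg
  set S : Set ℝ := {s | s ∈ Set.Icc t0 t ∧ 0 ≤ f s} with hS
  have hSne : S.Nonempty := ⟨t0, ⟨le_refl _, ht⟩, hf0⟩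
  have hScomp : IsCompact S := by
    apply (isCompact_Icc (a := t0) (b := t)).of_isClosed_subset
    · exact (isClosed_Icc).inter (isClosed_le continuous_const hdiff.continuous)
    · intro x hx; exact hx.1
  have hs_mem : sSup S ∈ S := hScomp.sSup_mem hSne
  set s := sSup S with hs
  obtain ⟨⟨hst0, hstt⟩, hfs⟩ := hs_mem
  have hst : s < t := hstt.lt_of_ne (by
    intro heq; rw [heq] at hfs; linarith)
  have hflt : ∀ u ∈ Set.Ioc s t, f u < 0 := by
    intro u hu
    obtain ⟨hu1, hu2⟩ := hu
    by_contra hfu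
    push_neg at hfu
    have : u ∈ S := ⟨⟨le_trans hst0 hu1.le, hu2⟩, hfu⟩
    exact absurd (le_csSup hScomp.bddAbove this) (not_le.mpr hu1)
  have hmono : MonotoneOn f (Set.Icc s t) := by
    apply monotoneOn_of_deriv_nonneg (convex_Icc s t) hdiff.continuous.continuousOn
      hdiff.differentiableOn
    intro x hx
    rw [interior_Icc] at hx
    have hfx : f x < 0 := hflt x ⟨hx.1, hx.2.le⟩
    have hx0 : (0:ℝ) ≤ x := le_trans (le_trans ht0 hst0) hx.1.le
    have h0 := hineq x hx0
    rw [Real.sign_of_neg hfx] at h0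
    have h1 : (0:ℝ) ≤ γ * |f x| ^ ρ :=
      mul_nonneg hγ.le (Real.rpow_nonneg (abs_nonneg _) _)
    linarith
  have := hmono ⟨le_refl s, hst.le⟩ ⟨hst.le, le_refl t⟩ hst.le
  linarith

lemma barrier_settle (γ ρ : ℝ) (hγ : 0 < γ) (hρ0 : 0 ≤ ρ) (hρ1 : ρ < 1)
    (f : ℝ → ℝ) (hdiff : Differentiable ℝ f)
    (hineq : ∀ t ≥ (0:ℝ), deriv f t ≥ -(γ * Real.sign (f t) * |f t| ^ ρ))
    (hf0 : f 0 < 0) :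
    ∃ t0, t0 ∈ Set.Icc (0:ℝ) (|f 0| ^ (1 - ρ) / (γ * (1 - ρ))) ∧ 0 ≤ f t0 := by
  set T : ℝ := |f 0| ^ (1 - ρ) / (γ * (1 - ρ)) with hT
  have hγρ : 0 < γ * (1 - ρ) := mul_pos hγ (by linarith)
  have hTpos : 0 < T := div_pos (Real.rpow_pos_of_pos (abs_pos.mpr hf0.ne) _) hγρ
  by_contra hcon
  push_neg at hcon
  have hflt : ∀ u ∈ Set.Icc (0:ℝ) T, f u < 0 := by
    intro u hu
    by_contra hfu
    push_neg at hfu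
    exact absurd hfu (not_le.mpr (hcon u hu))
  set g : ℝ → ℝ := fun u => (-f u) ^ (1 - ρ) + γ * (1 - ρ) * u with hg
  have hanti : AntitoneOn g (Set.Icc 0 T) := by
    apply antitoneOn_of_deriv_nonpos (convex_Icc 0 T)
    · apply ContinuousOn.add
      · apply ContinuousOn.rpow_const (hdiff.continuous.neg.continuousOn)
        intro x hx
        have := hflt x hx
        exact Or.inl (by simp only [ne_eq, Pi.neg_apply, neg_eq_zero]; linarith)
      · exact (continuous_const.mul continuous_id).continuousOn
    · rw [interior_Icc]
      intro x hx
      have hfx : f x < 0 := hflt x ⟨hx.1.le, hx.2.le⟩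
      have hd1 := HasDerivAt.rpow_const (p := 1 - ρ) ((hdiff x).hasDerivAt.neg)
        (Or.inl (by simp only [ne_eq, Pi.neg_apply, neg_eq_zero]; intro hc; linarith))
      exact ((hd1.add ((hasDerivAt_id x).const_mul (γ * (1 - ρ)))).differentiableAt).differentiableWithinAt
    · rw [interior_Icc]
      intro x hx
      have hfx : f x < 0 := hflt x ⟨hx.1.le, hx.2.le⟩
      have hd1 := HasDerivAt.rpow_const (p := 1 - ρ) ((hdiff x).hasDerivAt.neg)
        (Or.inl (by simp only [ne_eq, Pi.neg_apply, neg_eq_zero]; intro hc; linarith))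
      have hd : HasDerivAt g
          (-deriv f x * (1 - ρ) * (-f x) ^ (1 - ρ - 1) + γ * (1 - ρ) * 1) x :=
        hd1.add ((hasDerivAt_id x).const_mul (γ * (1 - ρ)))
      rw [hd.deriv]
      set A := (-f x) ^ (1 - ρ - 1) with hA
      set B := (-f x) ^ ρ with hB
      have hder : γ * B ≤ deriv f x := by
        have h0 := hineq x hx.1.le
        rw [Real.sign_of_neg hfx, abs_of_neg hfx] at h0
        simpa [hB] using h0
      have hpos : (0:ℝ) < -f x := by linarith
      have hApos : (0:ℝ) < A := Real.rpow_pos_of_pos hpos _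
      have key : A * B = 1 := by
        rw [hA, hB, ← Real.rpow_add hpos]
        norm_num
      have h1 : γ * B * ((1 - ρ) * A) ≤ deriv f x * ((1 - ρ) * A) :=
        mul_le_mul_of_nonneg_right hder (mul_nonneg (by linarith) hApos.le)
      have h2 : γ * B * ((1 - ρ) * A) = γ * (1 - ρ) := by
        have : γ * B * ((1 - ρ) * A) = γ * (1 - ρ) * (A * B) := by ring
        rw [this, key, mul_one]
      rw [h2] at h1
      nlinarith [h1]
  have hmem0 : (0:ℝ) ∈ Set.Icc (0:ℝ) T := ⟨le_refl _, hTpos.le⟩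
  have hmemT : T ∈ Set.Icc (0:ℝ) T := ⟨hTpos.le, le_refl _⟩
  have hle := hanti hmem0 hmemT hTpos.le
  have hgT : g T = (-f T) ^ (1 - ρ) + |f 0| ^ (1 - ρ) := by
    rw [hg]
    simp only
    rw [hT]
    field_simp
    rw [mul_div_cancel_left₀ _ (by linarith : (1 - ρ) ≠ 0)]
  have hg0 : g 0 = |f 0| ^ (1 - ρ) := by
    rw [hg]; simp [abs_of_neg hf0]
  have hfT : f T < 0 := hflt T hmemT
  have hposT : (0:ℝ) < (-f T) ^ (1 - ρ) := Real.rpow_pos_of_pos (by linarith) _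
  rw [hgT, hg0] at hle
  linarith

open Classical in
/-- Ensemble finite-time convergence: if every edge barrier `h e` satisfies the
finite-time barrier inequality, then all barriers are nonnegative after a time `T`
bounded by the maximum of the individual settling times over initially-violated
edges (and `T = 0` if all are initially satisfied). -/
theorem stmt_8 {ι : Type*} (E : Finset (ι × ι)) (hE : E.Nonempty)
    (γ ρ : ℝ) (hγ : 0 < γ) (hρ0 : 0 ≤ ρ) (hρ1 : ρ < 1)
    (h : ι × ι → ℝ → ℝ) (hdiff : ∀ e ∈ E, Differentiable ℝ (h e))
    (hineq : ∀ e ∈ E, ∀ t ≥ (0 : ℝ),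
      deriv (h e) t ≥ -(γ * Real.sign (h e t) * |h e t| ^ ρ)) :
    ∃ T : ℝ, 0 ≤ T ∧ (∀ e ∈ E, ∀ t ≥ T, 0 ≤ h e t) ∧
      ((∀ e ∈ E, 0 ≤ h e 0) → T = 0) ∧
      (∀ hne : (E.filter fun e => h e 0 < 0).Nonempty,
        T ≤ (E.filter fun e => h e 0 < 0).sup' hne
          fun e => |h e 0| ^ (1 - ρ) / (γ * (1 - ρ))) := by
  set F := E.filter fun e => h e 0 < 0 with hF
  have hγρ : 0 < γ * (1 - ρ) := mul_pos hγ (by linarith)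
  by_cases hne : F.Nonempty
  · have hTnn : (0:ℝ) ≤ F.sup' hne fun e => |h e 0| ^ (1 - ρ) / (γ * (1 - ρ)) := by
      obtain ⟨e', he'⟩ := hne
      refine le_trans ?_
        (Finset.le_sup' (fun e => |h e 0| ^ (1 - ρ) / (γ * (1 - ρ))) he')
      positivity
    refine ⟨F.sup' hne fun e => |h e 0| ^ (1 - ρ) / (γ * (1 - ρ)), hTnn, ?_, ?_, ?_⟩
    · intro e he t ht
      by_cases h0 : 0 ≤ h e 0
      · exact barrier_invariance γ ρ hγ (h e) (hdiff e he) (hineq e he)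
          le_rfl h0 (le_trans hTnn ht)
      · push_neg at h0
        obtain ⟨t0, ⟨ht01, ht02⟩, hft0⟩ := barrier_settle γ ρ hγ hρ0 hρ1 (h e)
          (hdiff e he) (hineq e he) h0
        have heF : e ∈ F := Finset.mem_filter.mpr ⟨he, h0⟩
        have : t0 ≤ t :=
          le_trans ht02 (le_trans
            (Finset.le_sup' (fun e => |h e 0| ^ (1 - ρ) / (γ * (1 - ρ))) heF) ht)
        exact barrier_invariance γ ρ hγ (h e) (hdiff e he) (hineq e he)
          ht01 hft0 this
    · intro hall
      obtain ⟨e, he⟩ := hne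
      rw [hF, Finset.mem_filter] at he
      exact absurd (hall e he.1) (not_le.mpr he.2)
    · intro hne'
      exact le_refl _
  · refine ⟨0, le_refl _, ?_, fun _ => rfl, fun hne' => absurd hne' hne⟩
    intro e he t ht
    have h0 : 0 ≤ h e 0 := by
      by_contra hc
      push_neg at hc
      exact hne ⟨e, Finset.mem_filter.mpr ⟨he, hc⟩⟩
    exact barrier_invariance γ ρ hγ (h e) (hdiff e he) (hineq e he) le_rfl h0 ht
end
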